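/- arXiv:2302.01213 — 4 statements merged into one kernel-verified Lean document; each statement's English description precedes it below -/
import Mathlib

section
/- Let n ≥ 3 and let C = [0,1]ⁿ ⊂ ℝⁿ be the unit cube. Then there exist convex bodies A, B ⊂ ℝⁿ such that F_C(A,B) < 0 (equivalently, the Bezout constant b₂(C) > 1). -/
open MeasureTheory
open scoped Pointwise

noncomputable section

/-- A convex body in ℝⁿ: a compact convex set with nonempty interior. -/
def IsConvexBody {n : ℕ} (K : Set (EuclideanSpace ℝ (Fin n))) : Prop :=
  Convex ℝ K ∧ IsCompact K ∧ (interior K).Nonempty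

/-- The mixed volume of an `n`-tuple of compact convex sets in ℝⁿ, defined via the
alternating-sum formula
`V(K₁,…,Kₙ) = (1/n!) ∑_{J ⊆ [n]} (−1)^{n−|J|} vol(∑_{i∈J} Kᵢ)`,
where the sum of sets is Minkowski sum (the empty Minkowski sum has volume `0`). -/
noncomputable def mixedVol (n : ℕ) (K : Fin n → Set (EuclideanSpace ℝ (Fin n))) : ℝ :=
  (1 / (n.factorial : ℝ)) *
    ∑ J : Finset (Fin n), (-1 : ℝ) ^ (n - J.card) *
      (MeasureTheory.volume (∑ i ∈ J, K i)).toReal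

/-- The Bezout form `F_K(A,B) = V(A,K[n−1]) V(B,K[n−1]) − V(A,B,K[n−2]) vol(K)`. -/
noncomputable def bezoutForm (n : ℕ) (K A B : Set (EuclideanSpace ℝ (Fin n))) : ℝ :=
  mixedVol n (fun i => if (i : ℕ) = 0 then A else K) *
    mixedVol n (fun i => if (i : ℕ) = 0 then B else K) -
  mixedVol n (fun i => if (i : ℕ) = 0 then A else if (i : ℕ) = 1 then B else K) *
    (MeasureTheory.volume K).toReal

/-- The support function `h_K(u) = sup_{y ∈ K} ⟨y,u⟩`. -/
noncomputable def suppFun {n : ℕ} (K : Set (EuclideanSpace ℝ (Fin n)))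
    (u : EuclideanSpace ℝ (Fin n)) : ℝ :=
  sSup ((fun y => (inner ℝ y u : ℝ)) '' K)

/-- The face `K^u = {y ∈ K : ⟨y,u⟩ = h_K(u)}` of `K` in direction `u`. -/
def face {n : ℕ} (K : Set (EuclideanSpace ℝ (Fin n))) (u : EuclideanSpace ℝ (Fin n)) :
    Set (EuclideanSpace ℝ (Fin n)) :=
  {y ∈ K | (inner ℝ y u : ℝ) = suppFun K u}

/-- The (affine) dimension of a set: the rank of its vector span. -/
noncomputable def setDim {n : ℕ} (C : Set (EuclideanSpace ℝ (Fin n))) : ℕ :=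
  Module.finrank ℝ (vectorSpan ℝ C)

/-- The isoperimetric ratio `Isop(C) = ℋ^{k−1}(relbd C) / (k ℋ^k(C))` of a `k`-dimensional
compact convex set, where `relbd` is the relative (intrinsic) boundary. -/
noncomputable def isop {n : ℕ} (C : Set (EuclideanSpace ℝ (Fin n))) : ℝ :=
  (μH[(setDim C : ℝ) - 1] (intrinsicFrontier ℝ C)).toReal /
    ((setDim C : ℝ) * (μH[(setDim C : ℝ)] C).toReal)

/-- `F` is a facet of `K`: a face of `K` in some unit direction, of dimension `n − 1`. -/
def IsFacet {n : ℕ} (K F : Set (EuclideanSpace ℝ (Fin n))) : Prop :=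
  ∃ u : EuclideanSpace ℝ (Fin n), ‖u‖ = 1 ∧ F = face K u ∧ setDim F = n - 1

/-- `κ_d`, the volume of the `d`-dimensional Euclidean unit ball. -/
noncomputable def ballVol (d : ℕ) : ℝ :=
  (MeasureTheory.volume (Metric.closedBall (0 : EuclideanSpace ℝ (Fin d)) 1)).toReal

/-- The Wulff shape `W(Ω,g) = ⋂_{u ∈ Ω} {x : ⟨x,u⟩ ≤ g(u)}`. -/
def wulff {n : ℕ} (Ω : Set (EuclideanSpace ℝ (Fin n)))
    (g : EuclideanSpace ℝ (Fin n) → ℝ) : Set (EuclideanSpace ℝ (Fin n)) :=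
  {x | ∀ u ∈ Ω, (inner ℝ x u : ℝ) ≤ g u}

/-! For boxes `[0, sᵢ]` the volume of `∑_{i ∈ J} [0, sᵢ]` is `∏ⱼ ∑_{i ∈ J} sᵢⱼ`, so the
alternating sum defining the mixed volume is Ryser's formula: `V([0, s₁], …, [0, sₙ])` is the
permanent of `(sᵢⱼ)` divided by `n!`. Against the unit cube `C = [0, 1]ⁿ` this gives
`F_C([0, a], [0, b]) = (∑ a)(∑ b)/n² − ((∑ a)(∑ b) − ∑ aⱼbⱼ)/(n(n − 1))`, which equals
`−1/(n²(n − 1))` for `a = (2, 1, …, 1)` and `b = (1, 2, 1, …, 1)`. -/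

open Finset
open scoped Nat

section Ryser

variable {ι R : Type*} [Fintype ι] [DecidableEq ι] [CommRing R]

theorem sum_neg_one_pow_card_compl_of_subset (S : Finset ι) :
    ∑ J : Finset ι, (if S ⊆ J then (-1 : R) ^ #Jᶜ else 0) = if S = univ then 1 else 0 := by
  rw [← Equiv.sum_comp (compl_involutive.toPerm _)]
  simp only [Function.Involutive.coe_toPerm, compl_compl, subset_compl_comm (s := S)]
  rw [← sum_filter, filter_subset_univ]
  simp only [← compl_eq_empty_iff (s := S)]
  exact_mod_cast congrArg (Int.cast : ℤ → R) sum_powerset_neg_one_pow_card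

theorem sum_ite_bijective_eq_sum_perm {M : Type*} [AddCommMonoid M] (g : (ι → ι) → M) :
    ∑ f : ι → ι, (if f.Bijective then g f else 0) = ∑ σ : Equiv.Perm ι, g σ := by
  rw [← sum_filter, ← (Equiv.bijectiveEquiv (α := ι) (β := ι)).sum_comp]
  exact sum_subtype _ (by simp) g

theorem Matrix.sum_neg_one_pow_mul_prod_sum_eq_permanent (M : Matrix ι ι R) :
    ∑ J : Finset ι, (-1 : R) ^ #Jᶜ * ∏ j, ∑ i ∈ J, M i j = M.permanent := by
  have expand (J : Finset ι) : ∏ j, ∑ i ∈ J, M i j =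
      ∑ f : ι → ι, if univ.image f ⊆ J then ∏ j, M (f j) j else 0 := by
    rw [prod_univ_sum, ← sum_filter]
    exact sum_congr (by ext; simp [Fintype.mem_piFinset, image_subset_iff]) fun _ _ => rfl
  calc ∑ J : Finset ι, (-1 : R) ^ #Jᶜ * ∏ j, ∑ i ∈ J, M i j
      = ∑ f : ι → ι, (∑ J : Finset ι, if univ.image f ⊆ J then (-1 : R) ^ #Jᶜ else 0) *
          ∏ j, M (f j) j := by
        simp only [expand, mul_sum, sum_mul]
        rw [sum_comm]
        refine sum_congr rfl fun f _ => sum_congr rfl fun J _ => ?_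
        split_ifs <;> simp
    _ = ∑ f : ι → ι, if f.Bijective then ∏ j, M (f j) j else 0 := by
        refine sum_congr rfl fun f _ => ?_
        have : univ.image f = univ ↔ f.Bijective := by
          rw [eq_univ_iff_forall, ← Finite.surjective_iff_bijective]
          simp [Function.Surjective]
        rw [sum_neg_one_pow_card_compl_of_subset]
        simp only [this, ite_mul, one_mul, zero_mul]
    _ = M.permanent := sum_ite_bijective_eq_sum_perm _

end Ryser

section EuclideanBox

variable {ι : Type*}

def euclideanBox (c : ι → ℝ) : Set (EuclideanSpace ℝ ι) := {x | ∀ j, x j ∈ Set.Icc 0 (c j)}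

theorem euclideanBox_eq_preimage (c : ι → ℝ) :
    euclideanBox c = WithLp.ofLp ⁻¹' Set.univ.pi fun j => Set.Icc 0 (c j) := by
  ext x; simp only [euclideanBox, Set.mem_preimage, Set.mem_univ_pi, Set.mem_ofPred_eq]

theorem euclideanBox_zero : euclideanBox (0 : ι → ℝ) = 0 := by
  ext x
  simp only [euclideanBox, Pi.zero_apply, Set.Icc_self, Set.mem_singleton_iff, Set.mem_ofPred_eq,
    Set.mem_zero]
  exact ⟨fun h => by ext j; exact h j, fun h j => by simp [h]⟩

theorem euclideanBox_add {c d : ι → ℝ} (hc : 0 ≤ c) (hd : 0 ≤ d) :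
    euclideanBox c + euclideanBox d = euclideanBox (c + d) := by
  have Icc_add (j : ι) : Set.Icc 0 (c j) + Set.Icc 0 (d j) = Set.Icc 0 (c j + d j) := by
    simpa using Set.Icc_add_Icc (hc j) (hd j)
  ext x
  constructor
  · rintro ⟨y, hy, z, hz, rfl⟩ j
    simpa [← Icc_add] using Set.add_mem_add (hy j) (hz j)
  · intro hx
    have (j : ι) : x j ∈ Set.Icc 0 (c j) + Set.Icc 0 (d j) := by rw [Icc_add]; exact hx j
    choose y hy z hz hyz using this
    exact ⟨WithLp.toLp 2 y, hy, WithLp.toLp 2 z, hz, by ext j; simp [hyz]⟩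

theorem sum_euclideanBox {κ : Type*} (s : κ → ι → ℝ) (hs : ∀ i, 0 ≤ s i) (J : Finset κ) :
    ∑ i ∈ J, euclideanBox (s i) = euclideanBox (∑ i ∈ J, s i) := by
  classical
  induction J using Finset.induction_on with
  | empty => simp [euclideanBox_zero]
  | insert i J hi ih =>
    rw [sum_insert hi, sum_insert hi, ih, euclideanBox_add (hs i) (sum_nonneg fun i _ => hs i)]

variable [Fintype ι]

theorem volume_euclideanBox (c : ι → ℝ) :
    volume (euclideanBox c) = ∏ j, ENNReal.ofReal (c j) := by
  rw [euclideanBox_eq_preimage, (PiLp.volume_preserving_ofLp ι).measure_preimage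
    (MeasurableSet.univ_pi fun _ => measurableSet_Icc).nullMeasurableSet, Set.pi_univ_Icc,
    Real.volume_Icc_pi]
  simp

theorem isConvexBody_euclideanBox {n : ℕ} {c : Fin n → ℝ} (hc : ∀ j, 0 < c j) :
    IsConvexBody (euclideanBox c) := by
  have hofLp : Continuous (WithLp.ofLp : EuclideanSpace ℝ (Fin n) → Fin n → ℝ) :=
    PiLp.continuous_ofLp 2 _
  rw [IsConvexBody, euclideanBox_eq_preimage]
  refine ⟨?_, ?_, WithLp.toLp 2 (c / 2), mem_interior.2
    ⟨WithLp.ofLp ⁻¹' Set.univ.pi fun j => Set.Ioo 0 (c j), ?_, ?_, ?_⟩⟩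
  · exact (convex_pi fun j _ => convex_Icc _ _).linear_preimage
      (EuclideanSpace.equiv _ ℝ).toLinearMap
  · exact (EuclideanSpace.equiv _ ℝ).toHomeomorph.isCompact_preimage.2
      (isCompact_univ_pi fun j => isCompact_Icc)
  · exact Set.preimage_mono (Set.pi_mono fun j _ => Set.Ioo_subset_Icc_self)
  · exact (isOpen_set_pi Set.finite_univ fun j _ => isOpen_Ioo).preimage hofLp
  · simp [hc]

end EuclideanBox

theorem mixedVol_euclideanBox {n : ℕ} (s : Fin n → Fin n → ℝ) (hs : ∀ i, 0 ≤ s i) :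
    mixedVol n (fun i => euclideanBox (s i)) = (Matrix.of s).permanent / n ! := by
  rw [mixedVol, ← Matrix.sum_neg_one_pow_mul_prod_sum_eq_permanent, one_div_mul_eq_div]
  congr 1
  refine sum_congr rfl fun J _ => ?_
  rw [sum_euclideanBox s hs, volume_euclideanBox, ENNReal.toReal_prod, card_compl,
    Fintype.card_fin]
  congr 1
  refine prod_congr rfl fun j _ => ?_
  rw [Finset.sum_apply, ENNReal.toReal_ofReal (sum_nonneg fun i _ => hs i j)]
  rfl

section PermCount

variable {M : Type*}

theorem sum_perm_apply_zero [AddCommMonoid M] {k : ℕ} (f : Fin (k + 1) → M) :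
    ∑ σ : Equiv.Perm (Fin (k + 1)), f (σ 0) = k ! • ∑ j, f j := by
  rw [← Equiv.Perm.decomposeFin.symm.sum_comp, Fintype.sum_prod_type]
  simp [Equiv.Perm.decomposeFin_symm_apply_zero, Fintype.card_perm, sum_const, smul_sum]

theorem sum_perm_apply_zero_one [AddCommGroup M] {k : ℕ} (f : Fin (k + 2) → Fin (k + 2) → M) :
    ∑ σ : Equiv.Perm (Fin (k + 2)), f (σ 0) (σ 1) = k ! • ∑ p, (∑ q, f p q - f p p) := by
  rw [← Equiv.Perm.decomposeFin.symm.sum_comp, Fintype.sum_prod_type, smul_sum]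
  refine sum_congr rfl fun p _ => ?_
  simp only [Equiv.Perm.decomposeFin_symm_apply_zero, Equiv.Perm.decomposeFin_symm_apply_one]
  rw [sum_perm_apply_zero fun j => f p (Equiv.swap 0 p j.succ)]
  congr 1
  have h := Equiv.sum_comp (Equiv.swap 0 p) (f p)
  rw [Fin.sum_univ_succ, Equiv.swap_apply_left] at h
  rw [← h, add_sub_cancel_left]

end PermCount

section Cube

variable {k : ℕ}

theorem mixedVol_euclideanBox_euclideanBox_cube {a b : Fin (k + 2) → ℝ} (ha : 0 ≤ a)
    (hb : 0 ≤ b) :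
    mixedVol (k + 2) (fun i => if (i : ℕ) = 0 then euclideanBox a
      else if (i : ℕ) = 1 then euclideanBox b else euclideanBox 1) =
      ((∑ j, a j) * (∑ j, b j) - ∑ j, a j * b j) / ((k + 2) * (k + 1)) := by
  set s : Fin (k + 2) → Fin (k + 2) → ℝ :=
    fun i => if (i : ℕ) = 0 then a else if (i : ℕ) = 1 then b else 1 with hs_def
  have hs : ∀ i, 0 ≤ s i := fun i => by
    simp only [hs_def]; split_ifs <;> first | assumption | exact zero_le_one
  have hboxes : (fun i : Fin (k + 2) => if (i : ℕ) = 0 then euclideanBox a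
      else if (i : ℕ) = 1 then euclideanBox b else euclideanBox 1) =
      fun i => euclideanBox (s i) := by
    funext i; simp only [hs_def]; split_ifs <;> rfl
  have hperm : (Matrix.of s).permanent =
      k ! * ((∑ j, a j) * (∑ j, b j) - ∑ j, a j * b j) := by
    rw [← Matrix.permanent_transpose, Matrix.permanent]
    simp only [hs_def, Fin.val_eq_zero_iff, Matrix.transpose_apply, Matrix.of_apply,
      Fin.prod_univ_succ, ↓reduceIte, Fin.succ_ne_zero, Fin.val_succ, Nat.add_eq_right,
      Fin.succ_zero_eq_one, Pi.one_apply, prod_const_one, mul_one]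
    rw [sum_perm_apply_zero_one fun p q => a p * b q, nsmul_eq_mul, sum_sub_distrib, sum_mul_sum]
  rw [hboxes, mixedVol_euclideanBox s hs, hperm, Nat.factorial_succ, Nat.factorial_succ]
  push_cast
  field_simp
  ring

theorem mixedVol_euclideanBox_cube {a : Fin (k + 2) → ℝ} (ha : 0 ≤ a) :
    mixedVol (k + 2) (fun i => if (i : ℕ) = 0 then euclideanBox a else euclideanBox 1) =
      (∑ j, a j) / (k + 2) := by
  have h := mixedVol_euclideanBox_euclideanBox_cube ha zero_le_one
  simp only [ite_self, Pi.one_apply, mul_one, sum_const, card_univ, Fintype.card_fin,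
    nsmul_eq_mul, Nat.cast_add, Nat.cast_ofNat] at h
  rw [h]
  field_simp
  ring

theorem bezoutForm_cube_euclideanBox {a b : Fin (k + 2) → ℝ} (ha : 0 ≤ a) (hb : 0 ≤ b) :
    bezoutForm (k + 2) (euclideanBox 1) (euclideanBox a) (euclideanBox b) =
      (∑ j, a j) * (∑ j, b j) / (k + 2) ^ 2 -
        ((∑ j, a j) * (∑ j, b j) - ∑ j, a j * b j) / ((k + 2) * (k + 1)) := by
  rw [bezoutForm, mixedVol_euclideanBox_cube ha, mixedVol_euclideanBox_cube hb,
    mixedVol_euclideanBox_euclideanBox_cube ha hb, volume_euclideanBox]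
  simp only [Pi.one_apply, ENNReal.ofReal_one, prod_const_one, ENNReal.toReal_one]
  field_simp

end Cube

/-- For the unit cube `C = [0,1]ⁿ ⊂ ℝⁿ` (`n ≥ 3`), there are convex
bodies `A, B` with `F_C(A,B) < 0`. -/
theorem cube_bezout_neg (n : ℕ) (hn : 3 ≤ n)
    (C : Set (EuclideanSpace ℝ (Fin n)))
    (hC : C = {x : EuclideanSpace ℝ (Fin n) | ∀ i, x i ∈ Set.Icc (0 : ℝ) 1}) :
    ∃ A B : Set (EuclideanSpace ℝ (Fin n)),
      IsConvexBody A ∧ IsConvexBody B ∧ bezoutForm n C A B < 0 := by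
  obtain ⟨k, rfl⟩ : ∃ k, n = k + 2 := ⟨n - 2, by omega⟩
  set a : Fin (k + 2) → ℝ := fun j => if j = 0 then 2 else 1
  set b : Fin (k + 2) → ℝ := fun j => if j = 1 then 2 else 1
  have ha : ∀ j, 0 < a j := fun j => by simp only [a]; split_ifs <;> norm_num
  have hb : ∀ j, 0 < b j := fun j => by simp only [b]; split_ifs <;> norm_num
  have sum_a : ∑ j, a j = k + 3 := by simp [a, Fin.sum_univ_succ]; ring
  have sum_b : ∑ j, b j = k + 3 := by simp [b, Fin.sum_univ_succ, Fin.succ_succ_ne_one]; ring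
  have sum_ab : ∑ j, a j * b j = k + 4 := by
    simp [a, b, Fin.sum_univ_succ, Fin.succ_succ_ne_one]; ring
  refine ⟨euclideanBox a, euclideanBox b, isConvexBody_euclideanBox ha,
    isConvexBody_euclideanBox hb, ?_⟩
  rw [show C = euclideanBox 1 from hC,
    bezoutForm_cube_euclideanBox (fun j => (ha j).le) (fun j => (hb j).le), sum_a, sum_b, sum_ab,
    sub_neg, div_lt_div_iff₀ (by positivity) (by positivity)]
  nlinarith
end
end

section
/- Let n ≥ 3, let L ⊂ ℝ^{n−1} × {0} ⊂ ℝⁿ be an (n−1)-dimensional compact convex set, let t > 0, and let C = L + [0, t·eₙ] be the cylinder over L of height t. Then there exist convex bodies A, B ⊂ ℝⁿ such that F_C(A,B) < 0 (equivalently, the Bezout constant b₂(C) > 1). -/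
/-!
For cylinders `L + [0, hᵢ eₙ]` over a common base `L` of `(n-1)`-volume `w`, the Minkowski
sum over `J` is the cylinder `|J| L + [0, (∑_{i∈J} hᵢ) eₙ]`, of volume
`w |J|^(n-1) ∑_{i∈J} hᵢ`.
Exchanging the sums in the alternating formula for the mixed volume leaves the
`(n-1)`-st forward difference of `x ↦ x^(n-1)`, which is `(n-1)!`, so
`V = w (h₁ + ⋯ + hₙ) / n`. For the cylinders `A`, `B` of heights `a`, `b` this gives
`F_C(A,B) = (w/n)² (a - t)(b - t)`, negative for `a = t/2`, `b = 2t`.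
-/

open MeasureTheory
open scoped Pointwise

noncomputable section

open Finset
open scoped Nat

local notation "𝔼" n:max => EuclideanSpace ℝ (Fin n)

theorem sum_range_neg_one_pow_mul_choose_mul_add_one_pow (d : ℕ) :
    ∑ k ∈ range (d + 1), (-1 : ℝ) ^ (d - k) * d.choose k * ((k : ℝ) + 1) ^ d = d ! := by
  have h := congrFun (fwdDiff_iter_eq_factorial (R := ℝ) (n := d)) 1
  rw [fwdDiff_iter_eq_sum_shift] at h
  simpa [zsmul_eq_mul, add_comm] using h

theorem sum_filter_mem_neg_one_pow_mul_card_pow (d : ℕ) (i : Fin (d + 1)) :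
    ∑ J : Finset (Fin (d + 1)) with i ∈ J, (-1 : ℝ) ^ (d + 1 - #J) * (#J : ℝ) ^ d =
      d ! := by
  have hnotMem : ∀ T ∈ (univ.erase i).powerset, i ∉ T := fun T hT hiT ↦
    notMem_erase i univ (mem_powerset.1 hT hiT)
  have hfilter : ({J | i ∈ J} : Finset (Finset (Fin (d + 1)))) =
      (univ.erase i).powerset.image (insert i) := by
    ext J
    simp only [mem_filter, mem_univ, true_and, mem_image, mem_powerset]
    refine ⟨fun hJ ↦ ⟨J.erase i, erase_subset_erase _ (subset_univ _), insert_erase hJ⟩,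
      ?_⟩
    rintro ⟨T, -, rfl⟩
    exact mem_insert_self i T
  rw [hfilter, sum_image fun T hT T' hT' ↦
      insert_erase_invOn.2.injOn (hnotMem T hT) (hnotMem T' hT'),
    sum_congr rfl fun T hT ↦ by rw [card_insert_of_notMem (hnotMem T hT)],
    sum_powerset_apply_card (fun k ↦ (-1 : ℝ) ^ (d + 1 - (k + 1)) * ((k + 1 : ℕ) : ℝ) ^ d),
    card_erase_of_mem (mem_univ i), Finset.card_univ, Fintype.card_fin, add_tsub_cancel_right,
    ← sum_range_neg_one_pow_mul_choose_mul_add_one_pow]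
  refine sum_congr rfl fun k _ ↦ ?_
  simp only [nsmul_eq_mul, Nat.add_sub_add_right, Nat.cast_add, Nat.cast_one]
  ring

theorem sum_neg_one_pow_mul_sum_mul_card_pow (d : ℕ) (h : Fin (d + 1) → ℝ) :
    ∑ J : Finset (Fin (d + 1)),
        (-1 : ℝ) ^ (d + 1 - #J) * ((∑ i ∈ J, h i) * (#J : ℝ) ^ d) = d ! * ∑ i, h i := by
  simp_rw [sum_mul, mul_sum]
  rw [sum_comm' (t' := univ) (s' := fun i ↦ {J | i ∈ J}) (by simp)]
  refine sum_congr rfl fun i _ ↦ ?_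
  rw [← sum_filter_mem_neg_one_pow_mul_card_pow d i, sum_mul]
  refine sum_congr rfl fun J _ ↦ ?_
  ring

theorem mixedVol_eq_of_volume_sum {d : ℕ} (K : Fin (d + 1) → Set (𝔼 (d + 1))) (w : ℝ)
    (h : Fin (d + 1) → ℝ)
    (hK : ∀ J, (volume (∑ i ∈ J, K i)).toReal = w * ((∑ i ∈ J, h i) * (#J : ℝ) ^ d)) :
    mixedVol (d + 1) K = w * (∑ i, h i) / (d + 1) := by
  simp_rw [mixedVol, hK, mul_left_comm _ w, ← mul_sum, sum_neg_one_pow_mul_sum_mul_card_pow,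
    Nat.factorial_succ]
  push_cast
  field_simp

section Cylinder

def dropLast (m : ℕ) : 𝔼 (m + 1) →ₗ[ℝ] 𝔼 m where
  toFun x := WithLp.toLp 2 (Fin.init x)
  map_add' _ _ := rfl
  map_smul' _ _ := rfl

def verticalSegment (m : ℕ) (H : ℝ) : Set (𝔼 (m + 1)) :=
  (fun r : ℝ ↦ r • EuclideanSpace.single (Fin.last m) 1) '' Set.Icc 0 H

variable {m : ℕ}

theorem segment_eq_verticalSegment {H : ℝ} (hH : 0 ≤ H) :
    segment ℝ 0 (H • EuclideanSpace.single (Fin.last m) 1) = verticalSegment m H := by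
  have hIcc : (· * H) '' Set.Icc (0 : ℝ) 1 = Set.Icc 0 H := by
    simpa using Set.image_mul_right_Icc zero_le_one hH
  rw [segment_eq_image_lineMap, verticalSegment, ← hIcc, Set.image_image]
  refine Set.image_congr fun r _ ↦ ?_
  simp [AffineMap.lineMap_apply, smul_smul]

@[simp]
theorem dropLast_apply (x : 𝔼 (m + 1)) (j : Fin m) : dropLast m x j = x j.castSucc := rfl

theorem ext_dropLast {x y : 𝔼 (m + 1)} (h : dropLast m x = dropLast m y)
    (hlast : x (Fin.last m) = y (Fin.last m)) : x = y := by
  ext i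
  induction i using Fin.lastCases with
  | last => exact hlast
  | cast j => simpa using congrArg (· j) h

@[simp]
theorem dropLast_single_last : dropLast m (EuclideanSpace.single (Fin.last m) 1) = 0 := by
  ext j
  simp [(Fin.castSucc_lt_last j).ne]

theorem add_verticalSegment_eq {M : Set (𝔼 (m + 1))} (hM : ∀ x ∈ M, x (Fin.last m) = 0)
    (H : ℝ) :
    M + verticalSegment m H =
      {x | dropLast m x ∈ dropLast m '' M ∧ x (Fin.last m) ∈ Set.Icc 0 H} := by
  ext x
  constructor
  · rintro ⟨y, hy, -, ⟨r, hr, rfl⟩, rfl⟩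
    refine ⟨⟨y, hy, by simp⟩, ?_⟩
    simpa [hM y hy] using hr
  · rintro ⟨⟨y, hy, hxy⟩, hlast⟩
    refine ⟨y, hy, _, ⟨x (Fin.last m), hlast, rfl⟩, ext_dropLast (by simp [hxy]) ?_⟩
    simp [hM y hy]

theorem volume_add_verticalSegment {M : Set (𝔼 (m + 1))} (hM : ∀ x ∈ M, x (Fin.last m) = 0)
    (H : ℝ) :
    volume (M + verticalSegment m H) = ENNReal.ofReal H * volume (dropLast m '' M) := by
  let toLp := (MeasurableEquiv.toLp 2 (Fin (m + 1) → ℝ)).symm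
  let split := MeasurableEquiv.piFinSuccAbove (fun _ : Fin (m + 1) ↦ ℝ) (Fin.last m)
  let toLpM := (MeasurableEquiv.toLp 2 (Fin m → ℝ)).symm
  have htoLp := EuclideanSpace.volume_preserving_symm_measurableEquiv_toLp (Fin (m + 1))
  have hsplit := volume_preserving_piFinSuccAbove (fun _ : Fin (m + 1) ↦ ℝ) (Fin.last m)
  have htoLpM := EuclideanSpace.volume_preserving_symm_measurableEquiv_toLp (Fin m)
  have hprism : M + verticalSegment m H =
      toLp ⁻¹' (split ⁻¹' (Set.Icc 0 H ×ˢ (toLpM.symm ⁻¹' (dropLast m '' M)))) := by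
    rw [add_verticalSegment_eq hM]
    ext x
    refine and_comm.trans (and_congr Iff.rfl ?_)
    simp only [Set.mem_image, MeasurableEquiv.symm_symm, MeasurableEquiv.toLp_symm_apply,
      MeasurableEquiv.piFinSuccAbove_apply, Fin.insertNthEquiv_last, Fin.snocEquiv_symm_apply,
      Set.mem_preimage, MeasurableEquiv.toLp_apply, toLpM, split, toLp]
    rfl
  rw [hprism, htoLp.measure_preimage_equiv, hsplit.measure_preimage_equiv, Measure.volume_eq_prod,
    Measure.prod_prod, htoLpM.symm.measure_preimage_equiv, Real.volume_Icc, sub_zero]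

theorem verticalSegment_add {a b : ℝ} (ha : 0 ≤ a) (hb : 0 ≤ b) :
    verticalSegment m a + verticalSegment m b = verticalSegment m (a + b) := by
  have hlin : (fun r : ℝ ↦ r • EuclideanSpace.single (Fin.last m) (1 : ℝ)) =
      LinearMap.toSpanSingleton ℝ _ (EuclideanSpace.single (Fin.last m) 1) := rfl
  rw [verticalSegment, verticalSegment, verticalSegment, hlin, ← Set.image_add,
    Set.Icc_add_Icc ha hb, zero_add]

theorem finset_sum_add_verticalSegment {L : Set (𝔼 (m + 1))} (hL : Convex ℝ L) {ι : Type*}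
    {h : ι → ℝ} (hh : ∀ i, 0 ≤ h i) {J : Finset ι} (hJ : J.Nonempty) :
    ∑ i ∈ J, (L + verticalSegment m (h i)) =
      (#J : ℝ) • L + verticalSegment m (∑ i ∈ J, h i) := by
  induction hJ using Finset.Nonempty.cons_induction with
  | singleton a => simp
  | cons a s ha hs ih =>
    rw [sum_cons, ih, sum_cons, card_cons, add_add_add_comm,
      verticalSegment_add (hh a) (sum_nonneg fun i _ ↦ hh i), Nat.cast_succ, add_comm _ (1 : ℝ),
      hL.add_smul zero_le_one (Nat.cast_nonneg _), one_smul]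

theorem volume_finset_sum_add_verticalSegment {L : Set (𝔼 (m + 1))} (hL : Convex ℝ L)
    (hLpl : ∀ x ∈ L, x (Fin.last m) = 0) {ι : Type*} {h : ι → ℝ} (hh : ∀ i, 0 ≤ h i)
    (J : Finset ι) :
    (volume (∑ i ∈ J, (L + verticalSegment m (h i)))).toReal =
      (volume (dropLast m '' L)).toReal * ((∑ i ∈ J, h i) * (#J : ℝ) ^ m) := by
  rcases J.eq_empty_or_nonempty with rfl | hJ
  · simp [← Set.singleton_zero]
  have hscaled : ∀ x ∈ (#J : ℝ) • L, x (Fin.last m) = 0 := by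
    rintro _ ⟨y, hy, rfl⟩
    simp [hLpl y hy]
  rw [finset_sum_add_verticalSegment hL hh hJ, volume_add_verticalSegment hscaled, image_smul_set,
    Measure.addHaar_smul_of_nonneg _ (Nat.cast_nonneg _), finrank_euclideanSpace_fin,
    ENNReal.toReal_mul, ENNReal.toReal_mul, ENNReal.toReal_ofReal (sum_nonneg fun i _ ↦ hh i),
    ENNReal.toReal_ofReal (by positivity)]
  ring

theorem mixedVol_add_verticalSegment {L : Set (𝔼 (m + 1))} (hL : Convex ℝ L)
    (hLpl : ∀ x ∈ L, x (Fin.last m) = 0) {h : Fin (m + 1) → ℝ} (hh : ∀ i, 0 ≤ h i) :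
    mixedVol (m + 1) (fun i ↦ L + verticalSegment m (h i)) =
      (volume (dropLast m '' L)).toReal * (∑ i, h i) / (m + 1) :=
  mixedVol_eq_of_volume_sum _ _ _ (volume_finset_sum_add_verticalSegment hL hLpl hh)

theorem bezoutForm_add_verticalSegment {k : ℕ} {L : Set (𝔼 (k + 2))} (hL : Convex ℝ L)
    (hLpl : ∀ x ∈ L, x (Fin.last (k + 1)) = 0) {a b t : ℝ} (ha : 0 ≤ a) (hb : 0 ≤ b)
    (ht : 0 ≤ t) :
    bezoutForm (k + 2) (L + verticalSegment (k + 1) t) (L + verticalSegment (k + 1) a)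
        (L + verticalSegment (k + 1) b) =
      ((volume (dropLast (k + 1) '' L)).toReal / (k + 2)) ^ 2 * ((a - t) * (b - t)) := by
  have hcyl : ∀ h : Fin (k + 2) → ℝ, (∀ i, 0 ≤ h i) →
      mixedVol (k + 2) (fun i ↦ L + verticalSegment (k + 1) (h i)) =
        (volume (dropLast (k + 1) '' L)).toReal * (∑ i, h i) / (k + 2) := fun h hh ↦ by
    rw [mixedVol_add_verticalSegment hL hLpl hh]
    push_cast
    ring
  have hA := hcyl (fun i ↦ if (i : ℕ) = 0 then a else t) fun i ↦ by split_ifs <;> assumption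
  have hB := hcyl (fun i ↦ if (i : ℕ) = 0 then b else t) fun i ↦ by split_ifs <;> assumption
  have hAB := hcyl (fun i ↦ if (i : ℕ) = 0 then a else if (i : ℕ) = 1 then b else t)
    fun i ↦ by split_ifs <;> assumption
  simp only [apply_ite (L + verticalSegment (k + 1) ·)] at hA hB hAB
  rw [bezoutForm, hA, hB, hAB, volume_add_verticalSegment hLpl, ENNReal.toReal_mul,
    ENNReal.toReal_ofReal ht]
  simp only [Fin.val_eq_zero_iff, Fin.sum_univ_succ, ↓reduceIte, Fin.succ_ne_zero, sum_const,
    Finset.card_univ, Fintype.card_fin, nsmul_eq_mul, Nat.cast_add, Nat.cast_one, Fin.val_succ,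
    Nat.add_eq_right]
  field_simp
  ring

theorem vectorSpan_add_verticalSegment_eq_top {L : Set (𝔼 (m + 1))} (hLne : L.Nonempty)
    (hLpl : ∀ x ∈ L, x (Fin.last m) = 0) (hLdim : Module.finrank ℝ (vectorSpan ℝ L) = m)
    {H : ℝ} (hH : 0 < H) :
    vectorSpan ℝ (L + verticalSegment m H) = ⊤ := by
  set e : 𝔼 (m + 1) := EuclideanSpace.single (Fin.last m) 1
  set V := vectorSpan ℝ (L + verticalSegment m H)
  have hLV : vectorSpan ℝ L ≤ V :=
    vectorSpan_mono ℝ (Set.subset_add_left L ⟨0, Set.left_mem_Icc.2 hH.le, zero_smul ℝ e⟩)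
  have heV : e ∈ V := by
    obtain ⟨x, hx⟩ := hLne
    have hHe : (x + H • e) -ᵥ (x + (0 : ℝ) • e) ∈ V :=
      vsub_mem_vectorSpan ℝ ⟨x, hx, _, ⟨H, Set.right_mem_Icc.2 hH.le, rfl⟩, rfl⟩
        ⟨x, hx, _, ⟨0, Set.left_mem_Icc.2 hH.le, rfl⟩, rfl⟩
    simpa [hH.ne'] using V.smul_mem H⁻¹ hHe
  have heL : e ∉ vectorSpan ℝ L := by
    have hker : vectorSpan ℝ L ≤ LinearMap.ker (EuclideanSpace.projₗ (Fin.last m)) := by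
      rw [vectorSpan_def, Submodule.span_le]
      rintro _ ⟨x, hx, y, hy, rfl⟩
      simp [hLpl x hx, hLpl y hy]
    intro he
    simpa [e] using hker he
  have hlt := Submodule.finrank_lt_finrank_of_lt (lt_of_le_of_ne hLV fun h ↦ heL (h ▸ heV))
  have hle := Submodule.finrank_le V
  rw [finrank_euclideanSpace_fin] at hle
  exact Submodule.eq_top_of_finrank_eq (by rw [finrank_euclideanSpace_fin]; omega)

theorem isConvexBody_add_verticalSegment {L : Set (𝔼 (m + 1))} (hL : Convex ℝ L)
    (hLc : IsCompact L) (hLne : L.Nonempty) (hLpl : ∀ x ∈ L, x (Fin.last m) = 0)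
    (hLdim : Module.finrank ℝ (vectorSpan ℝ L) = m) {H : ℝ} (hH : 0 < H) :
    IsConvexBody (L + verticalSegment m H) := by
  have hconv : Convex ℝ (L + verticalSegment m H) := by
    rw [← segment_eq_verticalSegment hH.le]
    exact hL.add (convex_segment _ _)
  refine ⟨hconv, hLc.add (isCompact_Icc.image (continuous_id.smul continuous_const)), ?_⟩
  have hne : (L + verticalSegment m H).Nonempty :=
    hLne.add ((Set.nonempty_Icc.2 hH.le).image _)
  rw [hconv.interior_nonempty_iff_affineSpan_eq_top,
    AffineSubspace.affineSpan_eq_top_iff_vectorSpan_eq_top_of_nonempty ℝ _ _ hne]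
  exact vectorSpan_add_verticalSegment_eq_top hLne hLpl hLdim hH

end Cylinder

theorem IsConvexBody.toReal_volume_pos {n : ℕ} {K : Set (𝔼 n)} (hK : IsConvexBody K) :
    0 < (volume K).toReal :=
  ENNReal.toReal_pos ((isOpen_interior.measure_pos volume hK.2.2).trans_le
    (measure_mono interior_subset)).ne' hK.2.1.measure_lt_top.ne

/-- For the cylinder `C = L + [0, t eₙ]` over an `(n−1)`-dimensional
compact convex set `L ⊂ ℝ^{n−1} × {0}` (`n ≥ 3`, `t > 0`), there are convex bodies
`A, B` with `F_C(A,B) < 0`. -/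
theorem cylinder_bezout_neg (n : ℕ) (hn : 3 ≤ n)
    (L : Set (EuclideanSpace ℝ (Fin n))) (hL : Convex ℝ L) (hLc : IsCompact L)
    (hLdim : setDim L = n - 1)
    (hLplane : ∀ x ∈ L, x ⟨n - 1, by omega⟩ = 0)
    (t : ℝ) (ht : 0 < t)
    (C : Set (EuclideanSpace ℝ (Fin n)))
    (hC : C = L + segment ℝ (0 : EuclideanSpace ℝ (Fin n))
      (t • EuclideanSpace.single (⟨n - 1, by omega⟩ : Fin n) (1 : ℝ))) :
    ∃ A B : Set (EuclideanSpace ℝ (Fin n)),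
      IsConvexBody A ∧ IsConvexBody B ∧ bezoutForm n C A B < 0 := by
  obtain ⟨k, rfl⟩ : ∃ k, n = k + 2 := ⟨n - 2, by omega⟩
  have hLne : L.Nonempty := Set.nonempty_iff_ne_empty.2 fun h ↦ by
    rw [h, setDim, vectorSpan_empty, finrank_bot] at hLdim
    omega
  have hbody : ∀ {H : ℝ}, 0 < H → IsConvexBody (L + verticalSegment (k + 1) H) :=
    isConvexBody_add_verticalSegment hL hLc hLne hLplane hLdim
  have hw : 0 < (volume (dropLast (k + 1) '' L)).toReal := by
    have hvol := (hbody ht).toReal_volume_pos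
    rwa [volume_add_verticalSegment hLplane, ENNReal.toReal_mul, ENNReal.toReal_ofReal ht.le,
      mul_pos_iff_of_pos_left ht] at hvol
  refine ⟨_, _, hbody (half_pos ht), hbody (by positivity : 0 < 2 * t), ?_⟩
  have hC' : C = L + verticalSegment (k + 1) t :=
    hC.trans (congrArg (L + ·) (segment_eq_verticalSegment ht.le))
  rw [hC', bezoutForm_add_verticalSegment hL hLplane (half_pos ht).le (by positivity) ht.le]
  have hneg : (t / 2 - t) * (2 * t - t) < 0 := by nlinarith
  exact mul_neg_of_pos_of_neg (by positivity) hneg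

end
end

section
/- For every real number a ≥ 3, one has (2/π) · ∫₀^{π/2} (1 + (a²−1)·sin²(ψ))^{−1/2} dψ < 3/4. More precisely, (2/π)·∫₀^{π/2} (1+(a²−1)sin²ψ)^{−1/2} dψ < (2/π)·(π/4 + (π/4)·(2/(a²+1))^{1/2}) < 3/4. -/
/-!
The integrand is at most `1` everywhere and strictly below `1` at `π/4`, while on `[π/4, π/2]`
we have `sin²ψ ≥ 1/2`, so there it is at most `((a² + 1)/2)^(-1/2)`. Splitting the integral
at `π/4` gives the first inequality; the second reduces to `2/(a² + 1) < 1/4`, i.e. `a² > 7`.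
-/

open MeasureTheory
open scoped Pointwise

noncomputable section

open Real Set intervalIntegral

theorem integral_lt_of_le_of_exists_lt_of_le {f : ℝ → ℝ} {a b c M N : ℝ}
    (hab : a < b) (hbc : b ≤ c) (hf : ContinuousOn f (Icc a c))
    (hM : ∀ x ∈ Icc a b, f x ≤ M) (hMlt : ∃ x ∈ Icc a b, f x < M)
    (hN : ∀ x ∈ Icc b c, f x ≤ N) :
    ∫ x in a..c, f x < M * (b - a) + N * (c - b) := by
  have hf₁ : ContinuousOn f (Icc a b) := hf.mono (Icc_subset_Icc_right hbc)
  have hf₂ : ContinuousOn f (Icc b c) := hf.mono (Icc_subset_Icc_left hab.le)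
  have hleft : ∫ x in a..b, f x < M * (b - a) := by
    simpa [mul_comm] using integral_lt_integral_of_continuousOn_of_le_of_exists_lt hab hf₁
      continuousOn_const (fun x hx => hM x (Ioc_subset_Icc_self hx)) hMlt
  have hright : ∫ x in b..c, f x ≤ N * (c - b) := by
    simpa [mul_comm] using integral_mono_on (μ := volume) hbc
      (hf₂.intervalIntegrable_of_Icc hbc) intervalIntegrable_const hN
  rw [← integral_add_adjacent_intervals (hf₁.intervalIntegrable_of_Icc hab.le)
    (hf₂.intervalIntegrable_of_Icc hbc)]
  linarith

theorem half_le_sin_sq_of_mem_Icc {ψ : ℝ} (hψ : ψ ∈ Icc (π / 4) (3 * π / 4)) :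
    1 / 2 ≤ sin ψ ^ 2 := by
  have : cos (2 * ψ) ≤ 0 := cos_nonpos_of_pi_div_two_le_of_le (by linarith [hψ.1])
    (by linarith [hψ.2])
  rw [sin_sq_eq_half_sub]
  linarith

theorem integral_one_add_mul_sin_sq_rpow_neg_half_lt {k : ℝ} (hk : 0 < k) :
    ∫ ψ in (0 : ℝ)..(π / 2), (1 + k * sin ψ ^ 2) ^ (-(1 / 2) : ℝ) <
      π / 4 + π / 4 * (1 + k / 2) ^ (-(1 / 2) : ℝ) := by
  have hpi := pi_pos
  have hbase : ∀ ψ, 1 ≤ 1 + k * sin ψ ^ 2 := fun ψ => by nlinarith [sq_nonneg (sin ψ)]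
  have hsin : ∀ ψ ∈ Icc (π / 4) (π / 2), 1 / 2 ≤ sin ψ ^ 2 := fun ψ hψ =>
    half_le_sin_sq_of_mem_Icc ⟨hψ.1, by linarith [hψ.2]⟩
  have hcont : Continuous fun ψ => (1 + k * sin ψ ^ 2) ^ (-(1 / 2) : ℝ) :=
    (by fun_prop : Continuous fun ψ => 1 + k * sin ψ ^ 2).rpow_const
      fun ψ => Or.inl (by linarith [hbase ψ])
  have hle_one : ∀ ψ, (1 + k * sin ψ ^ 2) ^ (-(1 / 2) : ℝ) ≤ 1 := fun ψ =>
    rpow_le_one_of_one_le_of_nonpos (hbase ψ) (by norm_num)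
  have hlt_one : (1 + k * sin (π / 4) ^ 2) ^ (-(1 / 2) : ℝ) < 1 :=
    rpow_lt_one_of_one_lt_of_neg
      (by nlinarith [hsin (π / 4) ⟨le_rfl, by linarith⟩]) (by norm_num)
  have hle_tail : ∀ ψ ∈ Icc (π / 4) (π / 2),
      (1 + k * sin ψ ^ 2) ^ (-(1 / 2) : ℝ) ≤ (1 + k / 2) ^ (-(1 / 2) : ℝ) := fun ψ hψ =>
    rpow_le_rpow_of_nonpos (by positivity) (by nlinarith [hsin ψ hψ]) (by norm_num)
  have := integral_lt_of_le_of_exists_lt_of_le (a := 0) (b := π / 4) (c := π / 2)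
    (by linarith) (by linarith) hcont.continuousOn (fun ψ _ => hle_one ψ)
    ⟨π / 4, ⟨by linarith, le_rfl⟩, hlt_one⟩ hle_tail
  linarith

/-- For every `a ≥ 3`:
`(2/π) ∫₀^{π/2} (1+(a²−1)sin²ψ)^{−1/2} dψ < (2/π)(π/4 + (π/4)(2/(a²+1))^{1/2}) < 3/4`. -/
theorem lambda_bound_dim_two (a : ℝ) (ha : 3 ≤ a) :
    2 / Real.pi * ∫ ψ in (0 : ℝ)..(Real.pi / 2),
        (1 + (a ^ 2 - 1) * Real.sin ψ ^ 2) ^ (-(1 / 2) : ℝ) <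
      2 / Real.pi * (Real.pi / 4 + Real.pi / 4 * (2 / (a ^ 2 + 1)) ^ ((1 : ℝ) / 2)) ∧
    2 / Real.pi * (Real.pi / 4 + Real.pi / 4 * (2 / (a ^ 2 + 1)) ^ ((1 : ℝ) / 2)) <
      3 / 4 := by
  have hc : (1 + (a ^ 2 - 1) / 2) ^ (-(1 / 2) : ℝ) = (2 / (a ^ 2 + 1)) ^ ((1 : ℝ) / 2) := by
    rw [show 1 + (a ^ 2 - 1) / 2 = (a ^ 2 + 1) / 2 by ring, rpow_neg (by positivity),
      ← inv_rpow (by positivity), inv_div]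
  have hc_lt : (2 / (a ^ 2 + 1)) ^ ((1 : ℝ) / 2) < 1 / 2 := by
    rw [← sqrt_eq_rpow, sqrt_lt' (by norm_num), div_lt_iff₀ (by positivity)]
    nlinarith
  constructor
  · refine mul_lt_mul_of_pos_left ?_ (by positivity)
    rw [← hc]
    exact integral_one_add_mul_sin_sq_rpow_neg_half_lt (by nlinarith)
  · have hpi := pi_pos
    calc _ = (1 + (2 / (a ^ 2 + 1)) ^ ((1 : ℝ) / 2)) / 2 := by field_simp; ring
      _ < 3 / 4 := by linarith

end
end

section
/- Let n ≥ 3, let W_{n−2} = ∫₀^{π/2} cos^{n−2}(ψ) dψ, and for a > 0 define λ_a = (∫₀^{π/2} cos^{n−2}(ψ) · (1 + (a²−1)·sin²(ψ))^{−1/2} dψ) / W_{n−2}. Then for every a ≥ 4n·√n one has λ_a < 1 − 1/(a·√n). In particular, λ_a · W_{n−2} ≤ π/(2n) + (π/2) · n · (n² + a² − 1)^{−1/2} for all a > 0. -/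
open MeasureTheory
open scoped Pointwise

noncomputable section

/-! Since `1 + (a² - 1) sin² ψ = cos² ψ + a² sin² ψ`, the integrand is at most `1`, and at
most `cos^(n-2) ψ / (a sin c)` for `ψ ≥ c`. Splitting the integral at `c = 1/(2√n)` and using
Jordan's inequality `sin c ≥ 2c/π` together with the Bernoulli bound `W_{n-2} ≥ 5/(6√n)` gives
the first claim. For the second, `cos^(n-2) ≤ cos` and the substitution `t = sin ψ` bound the
integral by `∫₀¹ (1 + (a² - 1) t²)^(-1/2) dt`, which is at most `min 1 (2/√a)` when `a ≥ 1`;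
this is compared with the right-hand side separately for `a ≤ 1`, `1 ≤ a ≤ n` and `n ≤ a`. -/

namespace LambdaBound

open Real Set intervalIntegral

lemma one_add_sq_sub_one_mul_sin_sq (a ψ : ℝ) :
    1 + (a ^ 2 - 1) * sin ψ ^ 2 = cos ψ ^ 2 + a ^ 2 * sin ψ ^ 2 := by
  linear_combination -sin_sq_add_cos_sq ψ

lemma one_add_sq_sub_one_mul_sin_sq_pos {a : ℝ} (ha : a ≠ 0) (ψ : ℝ) :
    0 < 1 + (a ^ 2 - 1) * sin ψ ^ 2 := by
  rw [one_add_sq_sub_one_mul_sin_sq]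
  rcases eq_or_ne (sin ψ) 0 with h | h
  · have := sin_sq_add_cos_sq ψ
    rw [h] at this ⊢
    nlinarith
  · positivity

lemma mul_rpow_neg_half_le_one {x y : ℝ} (hy : 0 ≤ y) (h : y ^ 2 ≤ x) :
    y * x ^ (-(1 / 2) : ℝ) ≤ 1 := by
  rw [rpow_neg ((sq_nonneg y).trans h), ← sqrt_eq_rpow, ← div_eq_mul_inv]
  exact div_le_one_of_le₀ ((le_sqrt hy ((sq_nonneg y).trans h)).mpr h) (sqrt_nonneg x)

lemma rpow_neg_half_le_inv {x y : ℝ} (hy : 0 < y) (h : y ^ 2 ≤ x) :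
    x ^ (-(1 / 2) : ℝ) ≤ y⁻¹ := by
  rw [inv_eq_one_div, le_div_iff₀' hy]
  exact mul_rpow_neg_half_le_one hy.le h

def lambdaIntegrand (k : ℕ) (a ψ : ℝ) : ℝ :=
  cos ψ ^ k * (1 + (a ^ 2 - 1) * sin ψ ^ 2) ^ (-(1 / 2) : ℝ)

variable {k : ℕ} {a : ℝ}

lemma continuous_lambdaIntegrand (k : ℕ) (ha : a ≠ 0) : Continuous (lambdaIntegrand k a) :=
  (continuous_cos.pow k).mul <|
    (by fun_prop : Continuous fun ψ => 1 + (a ^ 2 - 1) * sin ψ ^ 2).rpow_const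
      fun ψ => Or.inl (one_add_sq_sub_one_mul_sin_sq_pos ha ψ).ne'

lemma cos_nonneg_of_mem_Icc_zero {ψ : ℝ} (hψ : ψ ∈ Icc 0 (π / 2)) : 0 ≤ cos ψ :=
  cos_nonneg_of_mem_Icc ⟨by linarith [hψ.1, pi_pos], hψ.2⟩

lemma lambdaIntegrand_le_cos_mul (hk : 1 ≤ k) {ψ : ℝ} (hψ : ψ ∈ Icc 0 (π / 2)) :
    lambdaIntegrand k a ψ ≤ cos ψ * (1 + (a ^ 2 - 1) * sin ψ ^ 2) ^ (-(1 / 2) : ℝ) := by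
  have hcos := cos_nonneg_of_mem_Icc_zero hψ
  refine mul_le_mul_of_nonneg_right ?_ (rpow_nonneg ?_ _)
  · simpa using pow_le_pow_of_le_one hcos (cos_le_one ψ) hk
  · rw [one_add_sq_sub_one_mul_sin_sq]
    positivity

lemma lambdaIntegrand_le_one (hk : 1 ≤ k) {ψ : ℝ} (hψ : ψ ∈ Icc 0 (π / 2)) :
    lambdaIntegrand k a ψ ≤ 1 :=
  (lambdaIntegrand_le_cos_mul hk hψ).trans <|
    mul_rpow_neg_half_le_one (cos_nonneg_of_mem_Icc_zero hψ) <| by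
      rw [one_add_sq_sub_one_mul_sin_sq]
      exact le_add_of_nonneg_right (by positivity)

lemma lambdaIntegrand_le_div {c ψ : ℝ} (hψ : 0 ≤ cos ψ) (ha : 0 < a) (hc : 0 < sin c)
    (hcψ : sin c ≤ sin ψ) : lambdaIntegrand k a ψ ≤ cos ψ ^ k / (a * sin c) := by
  rw [div_eq_mul_inv]
  refine mul_le_mul_of_nonneg_left (rpow_neg_half_le_inv (by positivity) ?_) (pow_nonneg hψ k)
  rw [one_add_sq_sub_one_mul_sin_sq, mul_pow]
  calc a ^ 2 * sin c ^ 2 ≤ a ^ 2 * sin ψ ^ 2 :=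
        mul_le_mul_of_nonneg_left (pow_le_pow_left₀ hc.le hcψ 2) (sq_nonneg a)
    _ ≤ _ := le_add_of_nonneg_left (sq_nonneg _)

lemma integral_lambdaIntegrand_le_length (hk : 1 ≤ k) (ha : a ≠ 0) {c : ℝ} (hc0 : 0 ≤ c)
    (hc : c ≤ π / 2) : ∫ ψ in 0..c, lambdaIntegrand k a ψ ≤ c := by
  calc ∫ ψ in 0..c, lambdaIntegrand k a ψ ≤ ∫ _ in 0..c, (1 : ℝ) :=
        integral_mono_on hc0 ((continuous_lambdaIntegrand k ha).intervalIntegrable _ _)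
          intervalIntegrable_const fun ψ hψ => lambdaIntegrand_le_one hk ⟨hψ.1, hψ.2.trans hc⟩
    _ = c := by simp

lemma integral_cos_pow_mono_interval (k : ℕ) {b c : ℝ} (hb : 0 ≤ b) (hbc : b ≤ c)
    (hc : c ≤ π / 2) : ∫ x in b..c, cos x ^ k ≤ ∫ x in 0..π / 2, cos x ^ k :=
  integral_mono_interval hb hbc hc
    ((ae_restrict_mem measurableSet_Ioc).mono fun _ hx =>
      pow_nonneg (cos_nonneg_of_mem_Icc_zero (Ioc_subset_Icc_self hx)) k)
    ((continuous_cos.pow k).intervalIntegrable _ _)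

lemma integral_cos_pow_pos (k : ℕ) : 0 < ∫ x in 0..π / 2, cos x ^ k :=
  intervalIntegral_pos_of_pos_on ((continuous_cos.pow k).intervalIntegrable _ _)
    (fun _ hx => pow_pos (cos_pos_of_mem_Ioo ⟨by linarith [hx.1, pi_pos], hx.2⟩) k)
    (by positivity)

lemma sub_le_integral_cos_pow (k : ℕ) {r : ℝ} (hr0 : 0 ≤ r) (hr1 : r ≤ 1) :
    r - k * r ^ 3 / 6 ≤ ∫ x in 0..π / 2, cos x ^ k := by
  have hbernoulli : ∀ x ∈ Icc 0 r, 1 - k * x ^ 2 / 2 ≤ cos x ^ k := fun x hx => by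
    have hx1 : x ≤ 1 := hx.2.trans hr1
    calc 1 - k * x ^ 2 / 2 = 1 + k * -(x ^ 2 / 2) := by ring
      _ ≤ (1 + -(x ^ 2 / 2)) ^ k := one_add_mul_le_pow (by nlinarith [hx.1]) k
      _ ≤ cos x ^ k := pow_le_pow_left₀ (by nlinarith [hx.1]) (by
          simpa [← sub_eq_add_neg] using one_sub_sq_div_two_le_cos) k
  calc r - k * r ^ 3 / 6 = ∫ x in 0..r, (1 - k * x ^ 2 / 2) := by
        rw [integral_sub intervalIntegrable_const
          ((by fun_prop : Continuous fun x : ℝ => k * x ^ 2 / 2).intervalIntegrable _ _),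
          intervalIntegral.integral_div, intervalIntegral.integral_const_mul, integral_pow]
        simp only [intervalIntegral.integral_const, sub_zero, smul_eq_mul, mul_one]
        ring
    _ ≤ ∫ x in 0..r, cos x ^ k :=
        integral_mono_on hr0
          ((by fun_prop : Continuous fun x : ℝ => 1 - k * x ^ 2 / 2).intervalIntegrable _ _)
          ((continuous_cos.pow k).intervalIntegrable _ _) hbernoulli
    _ ≤ _ := integral_cos_pow_mono_interval k le_rfl hr0 (hr1.trans (by linarith [pi_gt_three]))

lemma integral_lambdaIntegrand_le_add_div (hk : 1 ≤ k) (ha : 0 < a) {c : ℝ} (hc0 : 0 < c)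
    (hc : c ≤ π / 2) :
    ∫ ψ in 0..π / 2, lambdaIntegrand k a ψ ≤ c + (∫ ψ in 0..π / 2, cos ψ ^ k) / (a * sin c) := by
  have hint : ∀ x y, IntervalIntegrable (lambdaIntegrand k a) volume x y :=
    fun x y => (continuous_lambdaIntegrand k ha.ne').intervalIntegrable x y
  have hsin : 0 < sin c := sin_pos_of_pos_of_lt_pi hc0 (by linarith [pi_pos])
  have htail : ∫ ψ in c..π / 2, lambdaIntegrand k a ψ ≤
      (∫ ψ in c..π / 2, cos ψ ^ k) / (a * sin c) := by
    rw [← intervalIntegral.integral_div]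
    refine integral_mono_on hc (hint _ _)
      (((continuous_cos.pow k).div_const _).intervalIntegrable _ _) fun ψ hψ =>
        lambdaIntegrand_le_div ?_ ha hsin ?_
    · exact cos_nonneg_of_mem_Icc_zero ⟨hc0.le.trans hψ.1, hψ.2⟩
    · exact sin_le_sin_of_le_of_le_pi_div_two (by linarith [pi_pos]) hψ.2 hψ.1
  calc ∫ ψ in 0..π / 2, lambdaIntegrand k a ψ
      = (∫ ψ in 0..c, lambdaIntegrand k a ψ) + ∫ ψ in c..π / 2, lambdaIntegrand k a ψ :=
        (integral_add_adjacent_intervals (hint _ _) (hint _ _)).symm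
    _ ≤ c + (∫ ψ in c..π / 2, cos ψ ^ k) / (a * sin c) :=
        add_le_add (integral_lambdaIntegrand_le_length hk ha.ne' hc0.le hc) htail
    _ ≤ _ := by gcongr; exact integral_cos_pow_mono_interval k hc0.le hc le_rfl

lemma continuous_one_add_mul_sq_rpow (ha : 1 ≤ a) :
    Continuous fun t : ℝ => (1 + (a ^ 2 - 1) * t ^ 2) ^ (-(1 / 2) : ℝ) :=
  (by fun_prop : Continuous fun t : ℝ => 1 + (a ^ 2 - 1) * t ^ 2).rpow_const fun t =>
    Or.inl (add_pos_of_pos_of_nonneg one_pos (mul_nonneg (by nlinarith) (sq_nonneg t))).ne'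

lemma integral_lambdaIntegrand_le_integral_rpow (hk : 1 ≤ k) (ha : 1 ≤ a) :
    ∫ ψ in 0..π / 2, lambdaIntegrand k a ψ ≤
      ∫ t in 0..1, (1 + (a ^ 2 - 1) * t ^ 2) ^ (-(1 / 2) : ℝ) := by
  have hg := continuous_one_add_mul_sq_rpow ha
  have hsubst : ∫ ψ in 0..π / 2, cos ψ * (1 + (a ^ 2 - 1) * sin ψ ^ 2) ^ (-(1 / 2) : ℝ) =
      ∫ t in 0..1, (1 + (a ^ 2 - 1) * t ^ 2) ^ (-(1 / 2) : ℝ) := by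
    simpa [mul_comm] using integral_comp_mul_deriv (a := 0) (b := π / 2)
      (fun x _ => hasDerivAt_sin x) continuous_cos.continuousOn hg
  rw [← hsubst]
  exact integral_mono_on (by positivity)
    ((continuous_lambdaIntegrand k (by positivity)).intervalIntegrable _ _)
    ((continuous_cos.mul (hg.comp continuous_sin)).intervalIntegrable _ _)
    fun ψ hψ => lambdaIntegrand_le_cos_mul hk hψ

lemma integral_one_add_mul_sq_rpow_le_length (ha : 1 ≤ a) {c : ℝ} (hc : 0 ≤ c) :
    ∫ t in 0..c, (1 + (a ^ 2 - 1) * t ^ 2) ^ (-(1 / 2) : ℝ) ≤ c := by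
  calc ∫ t in 0..c, (1 + (a ^ 2 - 1) * t ^ 2) ^ (-(1 / 2) : ℝ) ≤ ∫ _ in 0..c, (1 : ℝ) :=
        integral_mono_on hc ((continuous_one_add_mul_sq_rpow ha).intervalIntegrable _ _)
          intervalIntegrable_const fun t _ => by
            simpa using rpow_neg_half_le_inv one_pos
              (le_add_of_nonneg_right (mul_nonneg (by nlinarith) (sq_nonneg t)))
    _ = c := by simp

lemma integral_one_add_mul_sq_rpow_le_two_div_sqrt (ha : 1 ≤ a) :
    ∫ t in 0..1, (1 + (a ^ 2 - 1) * t ^ 2) ^ (-(1 / 2) : ℝ) ≤ 2 / √a := by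
  set g : ℝ → ℝ := fun t => (1 + (a ^ 2 - 1) * t ^ 2) ^ (-(1 / 2) : ℝ)
  have hint : ∀ x y, IntervalIntegrable g volume x y :=
    fun x y => (continuous_one_add_mul_sq_rpow ha).intervalIntegrable x y
  have hs : 0 < √a := sqrt_pos.mpr (by linarith)
  set c := (√a)⁻¹
  have hc0 : 0 < c := inv_pos.mpr hs
  have hc1 : c ≤ 1 := inv_le_one_of_one_le₀ (one_le_sqrt.mpr ha)
  have hac : a * c ^ 2 = 1 := by
    rw [inv_pow, sq_sqrt (by linarith), mul_inv_cancel₀ (by linarith)]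
  have htail : ∫ t in c..1, g t ≤ (1 - c) * (√a)⁻¹ := by
    calc ∫ t in c..1, g t ≤ ∫ _ in c..1, (√a)⁻¹ :=
          integral_mono_on hc1 (hint _ _) intervalIntegrable_const fun t ht =>
            rpow_neg_half_le_inv hs <| by
              have ht0 : 0 ≤ t := hc0.le.trans ht.1
              calc √a ^ 2 = a * (a * c ^ 2) := by rw [hac, mul_one, sq_sqrt (by linarith)]
                _ ≤ a * (a * t ^ 2) := by gcongr; exact ht.1
                _ ≤ 1 + (a ^ 2 - 1) * t ^ 2 := by nlinarith [ht.2]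
      _ = (1 - c) * (√a)⁻¹ := by simp
  calc ∫ t in 0..1, g t = (∫ t in 0..c, g t) + ∫ t in c..1, g t :=
        (integral_add_adjacent_intervals (hint _ _) (hint _ _)).symm
    _ ≤ c + (1 - c) * (√a)⁻¹ := add_le_add (integral_one_add_mul_sq_rpow_le_length ha hc0.le) htail
    _ ≤ 2 / √a := by
        rw [div_eq_mul_inv]
        nlinarith [mul_le_mul_of_nonneg_right hc0.le hc0.le]

lemma div_le_pi_div_two_mul_inv {m r y : ℝ} (hm : 0 ≤ m) (hy : 0 < y) (hr : 0 < r)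
    (h : r ≤ 3 / 2 * y) : m / y ≤ π / 2 * m * r⁻¹ := by
  calc m / y ≤ π / 3 * (m / y) :=
        le_mul_of_one_le_left (div_nonneg hm hy.le) (by linarith [pi_gt_three])
    _ = π / 2 * m * (3 / 2 * y)⁻¹ := by field_simp
    _ ≤ π / 2 * m * r⁻¹ := by gcongr

theorem integral_lambdaIntegrand_le_pi_div_add (hk : 1 ≤ k) {m : ℝ} (hm : 1 ≤ m) (ha : 0 < a) :
    ∫ ψ in 0..π / 2, lambdaIntegrand k a ψ ≤
      π / (2 * m) + π / 2 * m * (m ^ 2 + a ^ 2 - 1) ^ (-(1 / 2) : ℝ) := by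
  have hR : 0 < m ^ 2 + a ^ 2 - 1 := by nlinarith
  rw [rpow_neg hR.le, ← sqrt_eq_rpow]
  set r := √(m ^ 2 + a ^ 2 - 1)
  have hr : 0 < r := sqrt_pos.mpr hR
  have hm0 : 0 < m := by linarith
  have hfirst : 0 ≤ π / (2 * m) := by positivity
  rcases le_or_gt a 1 with ha1 | ha1
  · have hrm : r ≤ m := sqrt_le_left hm0.le |>.mpr (by nlinarith)
    calc ∫ ψ in 0..π / 2, lambdaIntegrand k a ψ ≤ π / 2 :=
          integral_lambdaIntegrand_le_length hk ha.ne' (by positivity) le_rfl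
      _ ≤ π / 2 * m * r⁻¹ := by
          rw [mul_assoc, ← div_eq_mul_inv]
          exact le_mul_of_one_le_right (by positivity) ((one_le_div hr).mpr hrm)
      _ ≤ _ := le_add_of_nonneg_left hfirst
  have hJ := integral_lambdaIntegrand_le_integral_rpow hk ha1.le
  rcases le_total a m with ham | ham
  · have hr32 : r ≤ 3 / 2 * m := sqrt_le_left (by positivity) |>.mpr (by nlinarith)
    calc ∫ ψ in 0..π / 2, lambdaIntegrand k a ψ ≤ 1 :=
          hJ.trans (integral_one_add_mul_sq_rpow_le_length ha1.le zero_le_one)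
      _ = m / m := (div_self hm0.ne').symm
      _ ≤ π / 2 * m * r⁻¹ := div_le_pi_div_two_mul_inv hm0.le hm0 hr hr32
      _ ≤ _ := le_add_of_nonneg_left hfirst
  · have hr32 : r ≤ 3 / 2 * a := sqrt_le_left (by positivity) |>.mpr (by nlinarith)
    have hs : 0 < √a := sqrt_pos.mpr ha
    have hsa : √a ^ 2 = a := sq_sqrt ha.le
    calc ∫ ψ in 0..π / 2, lambdaIntegrand k a ψ ≤ 2 / √a :=
          hJ.trans (integral_one_add_mul_sq_rpow_le_two_div_sqrt ha1.le)
      _ ≤ 3 / (2 * m) + m / a := by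
          rw [div_add_div _ _ (by positivity) ha.ne', div_le_div_iff₀ hs (by positivity)]
          nlinarith [mul_nonneg hs.le (sq_nonneg (√a - m)), pow_pos hs 3, hsa]
      _ ≤ _ := add_le_add (by gcongr; exact pi_gt_three.le)
          (div_le_pi_div_two_mul_inv hm0.le ha hr hr32)

theorem integral_lambdaIntegrand_lt_mul_integral_cos_pow {n : ℕ} (hn : 3 ≤ n)
    (ha : 4 * n * √n ≤ a) :
    ∫ ψ in 0..π / 2, lambdaIntegrand (n - 2) a ψ <
      (1 - 1 / (a * √n)) * ∫ ψ in 0..π / 2, cos ψ ^ (n - 2) := by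
  set W := ∫ ψ in 0..π / 2, cos ψ ^ (n - 2)
  have hn3 : (3 : ℝ) ≤ n := by exact_mod_cast hn
  set p := √(n : ℝ)
  have hp2 : p ^ 2 = n := sq_sqrt (by positivity)
  have hp1 : 1 ≤ p := one_le_sqrt.mpr (by linarith)
  have ha0 : 0 < a := lt_of_lt_of_le (by positivity) ha
  set c := 1 / (2 * p) with hc_def
  have hc0 : 0 < c := by positivity
  have hcπ : c ≤ π / 2 := by
    calc c ≤ 1 / 2 := by rw [hc_def, div_le_div_iff₀ (by positivity) two_pos]; linarith
      _ ≤ π / 2 := by linarith [pi_gt_three]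
  have hW : 5 / 3 * c ≤ W := by
    have hk : ((n - 2 : ℕ) : ℝ) ≤ n := by exact_mod_cast Nat.sub_le n 2
    calc 5 / 3 * c = 1 / p - n * (1 / p) ^ 3 / 6 := by rw [hc_def, ← hp2]; field_simp; ring
      _ ≤ 1 / p - ((n - 2 : ℕ) : ℝ) * (1 / p) ^ 3 / 6 := by gcongr
      _ ≤ W := sub_le_integral_cos_pow _ (by positivity) (div_le_one_of_le₀ hp1 (by positivity))
  have hsin : 12 / π ≤ a * sin c := by
    calc 12 / π ≤ 4 * p ^ 2 / π := by gcongr; linarith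
      _ = 4 * n * p * (2 / π * c) := by rw [hc_def, ← hp2]; field_simp
      _ ≤ a * sin c := mul_le_mul ha (mul_le_sin hc0.le hcπ) (by positivity) ha0.le
  have htail : W / (a * sin c) ≤ π / 12 * W := by
    calc W / (a * sin c) = W * (a * sin c)⁻¹ := div_eq_mul_inv _ _
      _ ≤ W * (12 / π)⁻¹ := by gcongr; exact (integral_cos_pow_pos _).le
      _ = π / 12 * W := by rw [inv_div, mul_comm]
  have hx : 1 / (a * p) ≤ 1 / 36 := by
    apply one_div_le_one_div_of_le (by norm_num)
    calc (36 : ℝ) ≤ 4 * n * n := by nlinarith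
      _ = 4 * n * p * p := by rw [mul_assoc _ p p, ← sq, hp2]
      _ ≤ a * p := by gcongr
  have hWpos : 0 < W := integral_cos_pow_pos _
  calc ∫ ψ in 0..π / 2, lambdaIntegrand (n - 2) a ψ ≤ c + W / (a * sin c) :=
        integral_lambdaIntegrand_le_add_div (by omega) ha0 hc0 hcπ
    _ ≤ c + π / 12 * W := by gcongr
    _ < (1 - 1 / (a * p)) * W := by
        nlinarith [mul_le_mul_of_nonneg_right hx hWpos.le,
          mul_le_mul_of_nonneg_right pi_lt_d2.le hWpos.le]

end LambdaBound

/-- For `n ≥ 3`, `W_{n−2} = ∫₀^{π/2} cos^{n−2}ψ dψ` and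
`λ_a = (∫₀^{π/2} cos^{n−2}ψ (1+(a²−1)sin²ψ)^{−1/2} dψ)/W_{n−2}`, one has
`λ_a < 1 − 1/(a√n)` for all `a ≥ 4n√n`; in particular
`λ_a W_{n−2} ≤ π/(2n) + (π/2) n (n²+a²−1)^{−1/2}` for all `a > 0`. -/
theorem lambda_bound_general (n : ℕ) (hn : 3 ≤ n)
    (W : ℝ) (hW : W = ∫ ψ in (0 : ℝ)..(Real.pi / 2), Real.cos ψ ^ (n - 2))
    (lam : ℝ → ℝ)
    (hlam : ∀ a : ℝ, lam a =
      (∫ ψ in (0 : ℝ)..(Real.pi / 2),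
        Real.cos ψ ^ (n - 2) * (1 + (a ^ 2 - 1) * Real.sin ψ ^ 2) ^ (-(1 / 2) : ℝ)) / W) :
    (∀ a : ℝ, 4 * (n : ℝ) * Real.sqrt n ≤ a → lam a < 1 - 1 / (a * Real.sqrt n)) ∧
    (∀ a : ℝ, 0 < a → lam a * W ≤ Real.pi / (2 * (n : ℝ)) +
      Real.pi / 2 * (n : ℝ) * ((n : ℝ) ^ 2 + a ^ 2 - 1) ^ (-(1 / 2) : ℝ)) := by
  have hWpos : 0 < W := hW ▸ LambdaBound.integral_cos_pow_pos (n - 2)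
  refine ⟨fun a ha => ?_, fun a ha => ?_⟩
  · rw [hlam, div_lt_iff₀ hWpos, hW]
    exact LambdaBound.integral_lambdaIntegrand_lt_mul_integral_cos_pow hn ha
  · rw [hlam, div_mul_cancel₀ _ hWpos.ne']
    exact LambdaBound.integral_lambdaIntegrand_le_pi_div_add (by omega)
      (Nat.one_le_cast.mpr (by omega)) ha

end
end
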